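/- Purified random oracle unpredictability: for the purified random oracle with database register D = ⊗_x D_x each of κ qubits initialized to |+^κ⟩, define EqualH(x) = Σ_{y∈{0,1}^κ} |y⟩⟨y|^L ⊗ |y⟩⟨y|^{D_x} and Has_{x} = I − |+^κ⟩⟨+^κ|^{D_x} (tensored with identity on other entries). Then ‖EqualH(x)·(I − Has_{x})‖_op = 2^{−κ/2}. -/

import Mathlib

/-- The ℓ²→ℓ² operator norm of a complex matrix. -/
noncomputable def opNorm {m n : Type*} [Fintype m] [Fintype n] [DecidableEq n]
    (A : Matrix m n ℂ) : ℝ :=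
  ‖LinearMap.toContinuousLinearMap (Matrix.toEuclideanLin A)‖

/-- The projector `EqualH(x) = Σ_{y∈{0,1}^κ} |y⟩⟨y|^L ⊗ |y⟩⟨y|^{D_x}` on registers
`(L, D_x)`. -/
def equalH (κ : ℕ) : Matrix ((Fin κ → Fin 2) × (Fin κ → Fin 2))
    ((Fin κ → Fin 2) × (Fin κ → Fin 2)) ℂ :=
  Matrix.of fun p q => if p = q ∧ p.1 = p.2 then 1 else 0

/-- The projector `I − Has_x = I^L ⊗ |+^κ⟩⟨+^κ|^{D_x}`.  Its `D_x`-entries are all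
`2^{−κ}`. -/
noncomputable def idTensPlus (κ : ℕ) : Matrix ((Fin κ → Fin 2) × (Fin κ → Fin 2))
    ((Fin κ → Fin 2) × (Fin κ → Fin 2)) ℂ :=
  Matrix.of fun p q => (if p.1 = q.1 then 1 else 0) * ((2 : ℂ) ^ κ)⁻¹

/-!
`E = EqualH` and `P = I ⊗ |+^κ⟩⟨+^κ|` are orthogonal projections, so the C*-identity gives
`‖E P‖² = ‖(E P)† (E P)‖ = ‖P E P‖`. Since `⟨+^κ|y⟩⟨y|+^κ⟩ = 2^{-κ}` for every `y`, the
compression `P E P` is `2^{-κ} P`, and a nonzero projection has norm `1`.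
-/

open Matrix
open scoped Matrix.Norms.L2Operator

theorem opNorm_eq_l2_opNorm {m n : Type*} [Fintype m] [Fintype n] [DecidableEq n]
    (A : Matrix m n ℂ) : opNorm A = ‖A‖ :=
  rfl

theorem IsStarProjection.norm_eq_one {E : Type*} [NormedRing E] [StarRing E] [CStarRing E]
    {e : E} (he : IsStarProjection e) (he0 : e ≠ 0) : ‖e‖ = 1 := by
  have h : ‖e‖ * ‖e‖ = ‖e‖ := by
    rw [← CStarRing.norm_star_mul_self, he.isSelfAdjoint.star_eq, he.isIdempotentElem.eq]
  exact mul_left_cancel₀ (norm_ne_zero_iff.mpr he0) (h.trans (mul_one _).symm)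

theorem IsStarProjection.norm_mul_sq_of_mul_mul_eq_smul {𝕜 E : Type*} [NormedField 𝕜]
    [NormedRing E] [StarRing E] [CStarRing E] [NormedAlgebra 𝕜 E] {e p : E}
    (he : IsStarProjection e) (hp : IsStarProjection p) (hp0 : p ≠ 0) {c : 𝕜}
    (hc : p * e * p = c • p) : ‖e * p‖ ^ 2 = ‖c‖ :=
  calc ‖e * p‖ ^ 2 = ‖star (e * p) * (e * p)‖ := by rw [CStarRing.norm_star_mul_self, sq]
    _ = ‖p * e * p‖ := by
      rw [star_mul, he.isSelfAdjoint.star_eq, hp.isSelfAdjoint.star_eq, mul_assoc,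
        ← mul_assoc e, he.isIdempotentElem.eq, ← mul_assoc]
    _ = ‖c‖ := by rw [hc, norm_smul, hp.norm_eq_one hp0, mul_one]

section

variable (ι : Type*) [Fintype ι] [DecidableEq ι]

def eqDiagProj : Matrix (ι × ι) (ι × ι) ℂ :=
  diagonal fun p => if p.1 = p.2 then 1 else 0

noncomputable def idTensUniformProj : Matrix (ι × ι) (ι × ι) ℂ :=
  of fun p q => (if p.1 = q.1 then 1 else 0) * (Fintype.card ι : ℂ)⁻¹

theorem isStarProjection_eqDiagProj : IsStarProjection (eqDiagProj ι) := by
  constructor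
  · rw [IsIdempotentElem, eqDiagProj, diagonal_mul_diagonal]
    exact congrArg diagonal (funext fun p => by split_ifs <;> simp)
  · rw [IsSelfAdjoint, star_eq_conjTranspose, eqDiagProj, diagonal_conjTranspose]
    exact congrArg diagonal (funext fun p => by split_ifs <;> simp_all)

theorem isStarProjection_idTensUniformProj : IsStarProjection (idTensUniformProj ι) := by
  constructor
  · ext p q
    have hcard : (Fintype.card ι : ℂ) ≠ 0 :=
      Nat.cast_ne_zero.mpr (Fintype.card_pos_iff.mpr ⟨p.1⟩).ne'
    simp only [idTensUniformProj, mul_apply, of_apply, Fintype.sum_prod_type]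
    split_ifs with h <;> simp [h]
    field_simp
  · ext p q
    simp only [idTensUniformProj, star_apply, of_apply]
    split_ifs <;> simp_all [eq_comm]

theorem idTensUniformProj_ne_zero [Nonempty ι] : idTensUniformProj ι ≠ 0 := by
  obtain ⟨i⟩ := ‹Nonempty ι›
  intro h
  simpa [idTensUniformProj] using congrFun₂ h (i, i) (i, i)

theorem idTensUniformProj_mul_eqDiagProj_mul_idTensUniformProj :
    idTensUniformProj ι * eqDiagProj ι * idTensUniformProj ι =
      (Fintype.card ι : ℂ)⁻¹ • idTensUniformProj ι := by
  ext p q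
  simp only [eqDiagProj, mul_apply (M := _ * diagonal _), mul_diagonal, idTensUniformProj,
    of_apply, Fintype.sum_prod_type, Matrix.smul_apply, smul_eq_mul]
  simp

theorem norm_eqDiagProj_mul_idTensUniformProj [Nonempty ι] :
    ‖eqDiagProj ι * idTensUniformProj ι‖ = (√(Fintype.card ι))⁻¹ := by
  have hsq := (isStarProjection_eqDiagProj ι).norm_mul_sq_of_mul_mul_eq_smul
    (isStarProjection_idTensUniformProj ι) (idTensUniformProj_ne_zero ι)
    (idTensUniformProj_mul_eqDiagProj_mul_idTensUniformProj ι)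
  rw [norm_inv, Complex.norm_natCast] at hsq
  rw [← Real.sqrt_inv, ← hsq, Real.sqrt_sq (norm_nonneg _)]

end

theorem equalH_eq_eqDiagProj (κ : ℕ) : equalH κ = eqDiagProj (Fin κ → Fin 2) := by
  ext p q
  simp [equalH, eqDiagProj, diagonal_apply, ite_and]

theorem idTensPlus_eq_idTensUniformProj (κ : ℕ) :
    idTensPlus κ = idTensUniformProj (Fin κ → Fin 2) := by
  simp [idTensPlus, idTensUniformProj]

/-- **purified random-oracle unpredictability.**
`‖EqualH(x) · (I − Has_x)‖_op = 2^{−κ/2}`. -/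
theorem stmt13 (κ : ℕ) :
    opNorm (equalH κ * idTensPlus κ) = (Real.sqrt (2 ^ κ))⁻¹ := by
  rw [opNorm_eq_l2_opNorm, equalH_eq_eqDiagProj, idTensPlus_eq_idTensUniformProj,
    norm_eqDiagProj_mul_idTensUniformProj]
  simp
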